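/- For independent exponentials $u \sim \mathcal{E}(\mu_1)$, $v \sim \mathcal{E}(\mu_2)$, $z \sim \mathcal{E}(1)$ and $W_1 = \frac{uz}{u+v}$, the identity $F_{W_1}(w) = \int_0^\infty \left(1 - e^{-w(1+\gamma)}\right) \frac{\mu_1/\mu_2}{(\gamma + \mu_1/\mu_2)^2}\, d\gamma$ holds for all $w \ge 0$. -/

import Mathlib

/-!
Writing `γ = v / u`, one has `W₁ ≤ w ↔ z ≤ w (1 + γ)` whenever `u > 0`, so conditioning on `(u, v)`
gives `F_{W₁}(w) = E[1 - exp (-w (1 + γ))]`. The ratio `γ` of independent exponentials has density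
`κ / (γ + κ)²` with `κ = μ₁ / μ₂`: substituting `v = u γ` turns the joint density into
`μ₁ μ₂ u exp (-(μ₁ + μ₂ γ) u)`, whose integral in `u` is `μ₁ μ₂ / (μ₁ + μ₂ γ)²`.
-/

open scoped ENNReal
open MeasureTheory ProbabilityTheory Real Set

namespace ProbabilityTheory

instance (r : ℝ) : SFinite (expMeasure r) :=
  inferInstanceAs (SFinite (volume.withDensity (gammaPDF 1 r)))

lemma lintegral_expMeasure (r : ℝ) {f : ℝ → ℝ≥0∞} (hf : Measurable f) :
    ∫⁻ x, f x ∂expMeasure r = ∫⁻ x in Ioi 0, ENNReal.ofReal (r * exp (-(r * x))) * f x := by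
  have hpdf : exponentialPDF r = (Ici 0).indicator fun x ↦ ENNReal.ofReal (r * exp (-(r * x))) := by
    ext x
    by_cases hx : 0 ≤ x <;> simp [exponentialPDF_eq, hx]
  have hmeas : Measurable (exponentialPDF r) := (measurable_exponentialPDFReal r).ennreal_ofReal
  rw [show expMeasure r = volume.withDensity (exponentialPDF r) from rfl,
    lintegral_withDensity_eq_lintegral_mul _ hmeas hf, restrict_Ioi_eq_restrict_Ici,
    ← lintegral_indicator measurableSet_Ici, hpdf]
  simp only [Pi.mul_apply, indicator_mul_left]

lemma expMeasure_Iic {r t : ℝ} (hr : 0 < r) (ht : 0 ≤ t) :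
    expMeasure r (Iic t) = ENNReal.ofReal (1 - exp (-(r * t))) := by
  have := isProbabilityMeasure_expMeasure hr
  rw [← ofReal_cdf, cdf_expMeasure_eq hr, if_pos ht]

lemma ae_pos_expMeasure {r : ℝ} (hr : 0 < r) : ∀ᵐ x ∂expMeasure r, 0 < x := by
  have := isProbabilityMeasure_expMeasure hr
  simp only [ae_iff, not_lt]
  change expMeasure r (Iic 0) = 0
  rw [← ofReal_cdf, cdf_expMeasure_eq hr]
  simp

lemma expMeasure_one_setOf_mul_div_add_le {x y w : ℝ} (hx : 0 < x) (hy : 0 ≤ y) (hw : 0 ≤ w) :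
    expMeasure 1 {t | x * t / (x + y) ≤ w} = ENNReal.ofReal (1 - exp (-(w * (1 + y / x)))) := by
  have hset : {t | x * t / (x + y) ≤ w} = Iic (w * (1 + y / x)) := by
    ext t
    rw [mem_ofPred_eq, mem_Iic, div_le_iff₀ (by positivity), one_add_div hx.ne', mul_div_assoc',
      le_div_iff₀ hx]
    constructor <;> intro h <;> linarith
  rw [hset, expMeasure_Iic one_pos (by positivity), one_mul]

lemma lintegral_Ioi_comp_mul_left {c : ℝ} (hc : 0 < c) (g : ℝ → ℝ≥0∞) :
    ∫⁻ y in Ioi 0, g y = ENNReal.ofReal c * ∫⁻ t in Ioi 0, g (c * t) := by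
  let e := (Homeomorph.mulLeft₀ c hc.ne').toMeasurableEquiv
  have hmap : volume.map e = ENNReal.ofReal c⁻¹ • volume := by
    rw [← abs_of_pos (inv_pos.2 hc)]
    exact Real.map_volume_mul_left hc.ne'
  have hpre : e ⁻¹' Ioi 0 = Ioi 0 := by
    change (c * ·) ⁻¹' Ioi 0 = Ioi 0
    rw [preimage_const_mul_Ioi₀ 0 hc, zero_div]
  have key : ENNReal.ofReal c⁻¹ * ∫⁻ y in Ioi 0, g y = ∫⁻ t in Ioi 0, g (c * t) := by
    rw [← smul_eq_mul, ← lintegral_smul_measure, ← Measure.restrict_smul, ← hmap,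
      e.measurableEmbedding.restrict_map, lintegral_map_equiv, hpre]
    rfl
  rw [← key, ← mul_assoc, ← ENNReal.ofReal_mul hc.le, mul_inv_cancel₀ hc.ne',
    ENNReal.ofReal_one, one_mul]

lemma lintegral_Ioi_mul_exp_neg_mul {c : ℝ} (hc : 0 < c) :
    ∫⁻ x in Ioi 0, ENNReal.ofReal (x * exp (-(c * x))) = ENNReal.ofReal (1 / c ^ 2) := by
  have hint : ∫ x in Ioi 0, x * exp (-(c * x)) = 1 / c ^ 2 := by
    have := integral_rpow_mul_exp_neg_mul_Ioi (a := 2) two_pos hc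
    norm_num [Real.Gamma_two] at this
    simpa using this
  rw [← hint, ofReal_integral_eq_lintegral_ofReal]
  · exact .of_integral_ne_zero (by rw [hint]; positivity)
  · filter_upwards [ae_restrict_mem measurableSet_Ioi] with x (hx : 0 < x)
    positivity

lemma lintegral_comp_div_expMeasure_prod {μ₁ μ₂ : ℝ} (hμ₁ : 0 < μ₁) (hμ₂ : 0 < μ₂)
    {f : ℝ → ℝ≥0∞} (hf : Measurable f) :
    ∫⁻ p, f (p.2 / p.1) ∂(expMeasure μ₁).prod (expMeasure μ₂) =
      ∫⁻ γ in Ioi 0, ENNReal.ofReal ((μ₁ / μ₂) / (γ + μ₁ / μ₂) ^ 2) * f γ := by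
  have hinner : ∀ x ∈ Ioi (0 : ℝ),
      ENNReal.ofReal (μ₁ * exp (-(μ₁ * x))) * ∫⁻ y, f (y / x) ∂expMeasure μ₂ =
        ∫⁻ γ in Ioi 0, ENNReal.ofReal (μ₁ * μ₂ * (x * exp (-((μ₁ + μ₂ * γ) * x)))) * f γ := by
    intro x (hx : 0 < x)
    rw [lintegral_expMeasure μ₂ (by fun_prop), lintegral_Ioi_comp_mul_left hx, ← mul_assoc,
      ← lintegral_const_mul' _ _ (by finiteness)]
    refine setLIntegral_congr_fun measurableSet_Ioi fun γ _ ↦ ?_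
    rw [mul_div_cancel_left₀ _ hx.ne', ← mul_assoc, ← ENNReal.ofReal_mul (by positivity),
      ← ENNReal.ofReal_mul (by positivity)]
    congr 2
    rw [show -((μ₁ + μ₂ * γ) * x) = -(μ₁ * x) + -(μ₂ * (x * γ)) by ring, exp_add]
    ring
  have hmeas : Measurable fun x ↦ ∫⁻ y, f (y / x) ∂expMeasure μ₂ :=
    (hf.comp (measurable_snd.div measurable_fst)).lintegral_prod_right'
  rw [lintegral_prod _ (by fun_prop), lintegral_expMeasure μ₁ hmeas,
    setLIntegral_congr_fun measurableSet_Ioi hinner, lintegral_lintegral_swap (by fun_prop)]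
  refine setLIntegral_congr_fun measurableSet_Ioi fun γ (hγ : 0 < γ) ↦ ?_
  simp_rw [ENNReal.ofReal_mul (by positivity : 0 ≤ μ₁ * μ₂)]
  rw [lintegral_mul_const _ (by fun_prop), lintegral_const_mul' _ _ (by finiteness),
    lintegral_Ioi_mul_exp_neg_mul (by positivity), ← ENNReal.ofReal_mul (by positivity)]
  congr 2
  field_simp
  ring

lemma iIndepFun.map_prodMk_prodMk {Ω β : Type*} [MeasurableSpace Ω] [MeasurableSpace β]
    {μ : Measure Ω} [IsProbabilityMeasure μ] {X Y Z : Ω → β} (h : iIndepFun ![X, Y, Z] μ)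
    (hX : Measurable X) (hY : Measurable Y) (hZ : Measurable Z) :
    μ.map (fun ω ↦ ((X ω, Y ω), Z ω)) = ((μ.map X).prod (μ.map Y)).prod (μ.map Z) := by
  have hmeas : ∀ i, Measurable (![X, Y, Z] i) := fun i ↦ by fin_cases i <;> assumption
  have hXY_Z : IndepFun (fun ω ↦ (X ω, Y ω)) Z μ := by
    simpa using h.indepFun_prodMk hmeas 0 1 2 (by decide) (by decide)
  have hXY : IndepFun X Y μ := by simpa using h.indepFun (i := 0) (j := 1) (by decide)
  rw [(indepFun_iff_map_prod_eq_prod_map_map (hX.prodMk hY).aemeasurable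
      hZ.aemeasurable).1 hXY_Z,
    (indepFun_iff_map_prod_eq_prod_map_map hX.aemeasurable hY.aemeasurable).1 hXY]

end ProbabilityTheory

/-- For independent exponentials `u ~ Exp(μ₁)`, `v ~ Exp(μ₂)`, `z ~ Exp(1)` and
`W₁ = u z/(u+v)`, the cdf of `W₁` satisfies
`F(w) = ∫₀^∞ (1 - e^{-w(1+γ)}) (μ₁/μ₂)/(γ + μ₁/μ₂)² dγ` for all `w ≥ 0`. -/
theorem cdf_W1_integral_formula
    {Ω : Type*} [MeasureSpace Ω] [IsProbabilityMeasure (ℙ : Measure Ω)]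
    (μ₁ μ₂ : ℝ) (hμ₁ : 0 < μ₁) (hμ₂ : 0 < μ₂)
    (u v z : Ω → ℝ)
    (hu : Measure.map u ℙ = expMeasure μ₁)
    (hv : Measure.map v ℙ = expMeasure μ₂)
    (hz : Measure.map z ℙ = expMeasure 1)
    (hmu : Measurable u) (hmv : Measurable v) (hmz : Measurable z)
    (hindep : iIndepFun ![u, v, z] ℙ) :
    ∀ w : ℝ, 0 ≤ w →
      (ℙ {ω | u ω * z ω / (u ω + v ω) ≤ w}).toReal =
        ∫ γ in Set.Ioi (0 : ℝ),
          (1 - Real.exp (-(w * (1 + γ)))) * ((μ₁ / μ₂) / (γ + μ₁ / μ₂) ^ 2) := by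
  intro w hw
  set S : Set ((ℝ × ℝ) × ℝ) := {p | p.1.1 * p.2 / (p.1.1 + p.1.2) ≤ w}
  have hS : MeasurableSet S := measurableSet_le (by fun_prop) (by fun_prop)
  have hslice : ∀ᵐ p ∂(expMeasure μ₁).prod (expMeasure μ₂),
      expMeasure 1 (Prod.mk p ⁻¹' S) = ENNReal.ofReal (1 - exp (-(w * (1 + p.2 / p.1)))) := by
    filter_upwards [Measure.quasiMeasurePreserving_fst.ae (ae_pos_expMeasure hμ₁),
      Measure.quasiMeasurePreserving_snd.ae (ae_pos_expMeasure hμ₂)] with p hx hy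
    rw [← expMeasure_one_setOf_mul_div_add_le hx hy.le hw]
    rfl
  have hnonneg : ∀ γ ∈ Ioi (0 : ℝ),
      0 ≤ (1 - exp (-(w * (1 + γ)))) * ((μ₁ / μ₂) / (γ + μ₁ / μ₂) ^ 2) := fun γ (hγ : 0 < γ) ↦
    mul_nonneg (sub_nonneg.2 (exp_le_one_iff.2 (neg_nonpos.2 (by positivity)))) (by positivity)
  rw [integral_eq_lintegral_of_nonneg_ae ((ae_restrict_mem measurableSet_Ioi).mono hnonneg)
      (by fun_prop),
    show {ω | u ω * z ω / (u ω + v ω) ≤ w} = (fun ω ↦ ((u ω, v ω), z ω)) ⁻¹' S from rfl,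
    ← Measure.map_apply (by fun_prop) hS, hindep.map_prodMk_prodMk hmu hmv hmz, hu, hv, hz,
    Measure.prod_apply hS, lintegral_congr_ae hslice,
    lintegral_comp_div_expMeasure_prod hμ₁ hμ₂
      (f := fun γ ↦ ENNReal.ofReal (1 - exp (-(w * (1 + γ))))) (by fun_prop)]
  congr 1
  refine setLIntegral_congr_fun measurableSet_Ioi fun γ _ ↦ ?_
  rw [ENNReal.ofReal_mul' (by positivity), mul_comm]
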